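/- Let U ∈ ℝ^{N×P} have full column rank, P_U = U(UᵀU)⁻¹Uᵀ, let A ∈ ℝ^{N×N} be symmetric and subspace-compatible with U, and set Ā = ½(I_N + A). Then the spectral radius of Ā − P_U satisfies ρ(Ā − P_U) ≤ ½ + ½·ρ(A − P_U) < 1. -/

import Mathlib

/-!
`P_U` is idempotent and `P_U A = P_U`, so `P_U` annihilates `M := Ā - P_U` from the left. Hence an
eigenvector `v` of `M` for an eigenvalue `μ ≠ 0` lies in `ker P_U`, where `2M = I + (A - P_U) - P_U`
acts as `I + (A - P_U)`: so `2μ - 1` is an eigenvalue of `A - P_U`, and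
`|μ| ≤ ½ + ½ |2μ - 1| ≤ ½ + ½ ρ(A - P_U)`. The strict bound holds because
`ρ(A - P_U) = ρ(P_U - A) < 1`.
-/

open Matrix

/-- Spectral radius of a real square matrix (largest modulus of a complex eigenvalue). -/
noncomputable def specRad {n : Type*} [Fintype n] [DecidableEq n]
    (X : Matrix n n ℝ) : ENNReal :=
  spectralRadius ℂ (X.map (algebraMap ℝ ℂ))

/-- The orthogonal projection matrix `P_U = U (UᵀU)⁻¹ Uᵀ` onto the range space of `U`. -/
noncomputable def projMat {n p : Type*} [Fintype n] [Fintype p] [DecidableEq p]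
    (U : Matrix n p ℝ) : Matrix n n ℝ :=
  U * (Uᵀ * U)⁻¹ * Uᵀ

/-- A matrix `A` is subspace-compatible with `U` if `A P_U = P_U`, `P_U A = P_U`, and
`ρ(P_U − A) < 1`. -/
def SubspaceCompatible {n p : Type*} [Fintype n] [DecidableEq n] [Fintype p] [DecidableEq p]
    (U : Matrix n p ℝ) (A : Matrix n n ℝ) : Prop :=
  A * projMat U = projMat U ∧ projMat U * A = projMat U ∧ specRad (projMat U - A) < 1

open scoped ENNReal

/-- When `UᵀU` is singular, `(UᵀU)⁻¹ = 0` in Mathlib, so `projMat U = 0` is idempotent too. -/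
lemma projMat_mul_self {n p : Type*} [Fintype n] [Fintype p] [DecidableEq p]
    (U : Matrix n p ℝ) : projMat U * projMat U = projMat U := by
  by_cases h : IsUnit (Uᵀ * U).det
  · calc projMat U * projMat U = U * ((Uᵀ * U)⁻¹ * (Uᵀ * U)) * (Uᵀ * U)⁻¹ * Uᵀ := by
          simp only [projMat, Matrix.mul_assoc]
      _ = projMat U := by rw [nonsing_inv_mul _ h, Matrix.mul_one, projMat]
  · simp [projMat, nonsing_inv_apply_not_isUnit _ h]

lemma spectralRadius_neg {𝕜 A : Type*} [NormedField 𝕜] [Ring A] [Algebra 𝕜 A] (a : A) :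
    spectralRadius 𝕜 (-a) = spectralRadius 𝕜 a := by
  simp only [spectralRadius, ← spectrum.neg_eq, ← Set.image_neg_eq_neg, iSup_image, nnnorm_neg]

lemma specRad_neg {n : Type*} [Fintype n] [DecidableEq n] (X : Matrix n n ℝ) :
    specRad (-X) = specRad X := by
  rw [specRad, specRad, Matrix.map_neg _ (map_neg _), spectralRadius_neg]

namespace Module.End

variable {K V : Type*} [Field K] [AddCommGroup V] [Module K V] [FiniteDimensional K V]

lemma two_mul_sub_one_mem_spectrum {m b p : End K V} (hpm : p * m = 0)
    (hm : 2 * m = 1 + b - p) {μ : K} (hμ : μ ∈ spectrum K m) (hμ0 : μ ≠ 0) :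
    2 * μ - 1 ∈ spectrum K b := by
  rw [← hasEigenvalue_iff_mem_spectrum] at hμ ⊢
  obtain ⟨v, hv⟩ := hμ.exists_hasEigenvector
  have hmv : m v = μ • v := hv.apply_eq_smul
  have hpv : p v = 0 := by
    have : μ • p v = 0 := by rw [← map_smul, ← hmv, ← mul_apply, hpm, LinearMap.zero_apply]
    exact (smul_eq_zero.mp this).resolve_left hμ0
  have hbv : b v = (2 * μ - 1) • v := by
    have := congr($hm v)
    simp only [mul_apply, ofNat_apply, hmv, LinearMap.add_apply, LinearMap.sub_apply, one_apply,
      hpv, sub_zero] at this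
    linear_combination (norm := module) -this
  exact hasEigenvalue_of_hasEigenvector ⟨mem_eigenspace_iff.mpr hbv, hv.2⟩

end Module.End

lemma nnnorm_le_half_add_half_nnnorm_two_mul_sub_one (μ : ℂ) :
    (‖μ‖₊ : ℝ≥0∞) ≤ 1 / 2 + 1 / 2 * ‖2 * μ - 1‖₊ := by
  have h : ‖μ‖ ≤ 1 / 2 + 1 / 2 * ‖2 * μ - 1‖ := by
    have := norm_add_le (2 * μ - 1) 1
    rw [sub_add_cancel, norm_mul, norm_one] at this
    norm_num at this
    linarith
  have h' : ‖μ‖₊ ≤ 1 / 2 + 1 / 2 * ‖2 * μ - 1‖₊ := by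
    rw [← NNReal.coe_le_coe]
    push_cast
    exact h
  simpa [ENNReal.coe_div] using ENNReal.coe_le_coe.mpr h'

lemma spectralRadius_le_half_add_half {A : Type*} [Ring A] [Algebra ℂ A] {a b : A}
    (h : ∀ μ ∈ spectrum ℂ a, μ ≠ 0 → 2 * μ - 1 ∈ spectrum ℂ b) :
    spectralRadius ℂ a ≤ 1 / 2 + 1 / 2 * spectralRadius ℂ b := by
  refine iSup₂_le fun μ hμ => ?_
  rcases eq_or_ne μ 0 with rfl | hμ0
  · simp
  calc (‖μ‖₊ : ℝ≥0∞) ≤ 1 / 2 + 1 / 2 * ‖2 * μ - 1‖₊ :=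
        nnnorm_le_half_add_half_nnnorm_two_mul_sub_one μ
    _ ≤ 1 / 2 + 1 / 2 * spectralRadius ℂ b := by
        gcongr
        exact le_iSup₂ (f := fun k _ => (‖k‖₊ : ℝ≥0∞)) _ (h μ hμ hμ0)

lemma specRad_le_half_add_half_specRad {n : Type*} [Fintype n] [DecidableEq n]
    {M B P : Matrix n n ℝ} (hPM : P * M = 0) (hM : 2 * M = 1 + B - P) :
    specRad M ≤ 1 / 2 + 1 / 2 * specRad B := by
  let toEnd : Matrix n n ℝ →+* Module.End ℂ (n → ℂ) :=
    (toLinAlgEquiv' : Matrix n n ℂ ≃ₐ[ℂ] _).toRingHom.comp (algebraMap ℝ ℂ).mapMatrix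
  refine spectralRadius_le_half_add_half fun μ hμ hμ0 => ?_
  rw [← AlgEquiv.spectrum_eq toLinAlgEquiv'] at hμ ⊢
  refine Module.End.two_mul_sub_one_mem_spectrum (m := toEnd M) (p := toEnd P) ?_ ?_ hμ hμ0
  · rw [← map_mul, hPM, map_zero]
  · rw [← map_ofNat toEnd 2, ← map_mul, hM, map_sub, map_add, map_one]
    rfl

theorem specRad_Abar_sub_proj_le_general
    {N P : ℕ} (U : Matrix (Fin N) (Fin P) ℝ)
    (A : Matrix (Fin N) (Fin N) ℝ) (hcomp : SubspaceCompatible U A) :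
    specRad ((1 / 2 : ℝ) • ((1 : Matrix (Fin N) (Fin N) ℝ) + A) - projMat U)
        ≤ 1 / 2 + (1 / 2) * specRad (A - projMat U) ∧
      (1 / 2 : ENNReal) + (1 / 2) * specRad (A - projMat U) < 1 := by
  obtain ⟨-, hPA, hρ⟩ := hcomp
  have hP_mul : projMat U * ((1 / 2 : ℝ) • (1 + A) - projMat U) = 0 := by
    rw [Matrix.mul_sub, Matrix.mul_smul, Matrix.mul_add, Matrix.mul_one, hPA, projMat_mul_self]
    module
  have htwo_mul :
      2 * ((1 / 2 : ℝ) • (1 + A) - projMat U) = 1 + (A - projMat U) - projMat U := by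
    rw [two_mul]
    module
  refine ⟨specRad_le_half_add_half_specRad hP_mul htwo_mul, ?_⟩
  rw [← neg_sub, specRad_neg]
  calc (1 / 2 : ℝ≥0∞) + 1 / 2 * specRad (projMat U - A) < 1 / 2 + 1 / 2 * 1 := by
        gcongr <;> norm_num
    _ = 1 := by rw [mul_one, ENNReal.add_halves]

/-- With `U` of full column rank, `A` symmetric and subspace-compatible
with `U`, and `Ā = ½(I + A)`, the spectral radius satisfies
`ρ(Ā − P_U) ≤ ½ + ½ ρ(A − P_U) < 1`. -/
theorem specRad_Abar_sub_proj_le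
    {N P : ℕ} (U : Matrix (Fin N) (Fin P) ℝ) (hU : U.rank = P)
    (A : Matrix (Fin N) (Fin N) ℝ) (hA : A.IsSymm) (hcomp : SubspaceCompatible U A) :
    specRad ((1 / 2 : ℝ) • ((1 : Matrix (Fin N) (Fin N) ℝ) + A) - projMat U)
        ≤ 1 / 2 + (1 / 2) * specRad (A - projMat U) ∧
      (1 / 2 : ENNReal) + (1 / 2) * specRad (A - projMat U) < 1 :=
  specRad_Abar_sub_proj_le_general U A hcomp
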